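/- arXiv:math/0609765 — 2 statements merged into one kernel-verified Lean document; each statement's English description precedes it below -/
import Mathlib

section
/- In Euclidean space ℝⁿ, two vectors P₀P₁ and Q₀Q₁ are parallel (i.e., ⟪P₁−P₀, Q₁−Q₀⟫ = ‖P₁−P₀‖·‖Q₁−Q₀‖) if and only if σ(P₀,Q₁) + σ(P₁,Q₀) − σ(P₀,Q₀) − σ(P₁,Q₁) = √(2σ(P₀,P₁))·√(2σ(Q₀,Q₁)), where σ(P,Q) = (1/2)·‖P−Q‖². -/
theorem stmt7 (n : ℕ) (σ : EuclideanSpace ℝ (Fin n) → EuclideanSpace ℝ (Fin n) → ℝ)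
    (hσ : ∀ P Q, σ P Q = (1/2) * ‖P - Q‖ ^ 2) :
    ∀ P₀ P₁ Q₀ Q₁ : EuclideanSpace ℝ (Fin n),
      ((inner ℝ (P₁ - P₀) (Q₁ - Q₀) : ℝ) = ‖P₁ - P₀‖ * ‖Q₁ - Q₀‖) ↔
        σ P₀ Q₁ + σ P₁ Q₀ - σ P₀ Q₀ - σ P₁ Q₁ =
          Real.sqrt (2 * σ P₀ P₁) * Real.sqrt (2 * σ Q₀ Q₁) := by
  intro P₀ P₁ Q₀ Q₁
  simp only [hσ]
  rw [show (2:ℝ) * ((1/2) * ‖P₀ - P₁‖ ^ 2) = ‖P₀ - P₁‖ ^ 2 by ring,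
      show (2:ℝ) * ((1/2) * ‖Q₀ - Q₁‖ ^ 2) = ‖Q₀ - Q₁‖ ^ 2 by ring,
      Real.sqrt_sq (norm_nonneg _), Real.sqrt_sq (norm_nonneg _),
      norm_sub_rev P₀ P₁, norm_sub_rev Q₀ Q₁]
  have key : (1/2:ℝ) * ‖P₀ - Q₁‖ ^ 2 + (1/2) * ‖P₁ - Q₀‖ ^ 2 - (1/2) * ‖P₀ - Q₀‖ ^ 2
      - (1/2) * ‖P₁ - Q₁‖ ^ 2 = (inner ℝ (P₁ - P₀) (Q₁ - Q₀) : ℝ) := by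
    simp only [← real_inner_self_eq_norm_sq, inner_sub_sub_self, inner_sub_left,
      inner_sub_right, real_inner_comm P₀ Q₀, real_inner_comm P₀ Q₁,
      real_inner_comm P₁ Q₀, real_inner_comm P₁ Q₁]
    ring
  rw [key]
end

section
/- In Euclidean space ℝⁿ, three points A, B, C are collinear if and only if (σ(A,B)+σ(A,C)−σ(B,C))² = 4·σ(A,B)·σ(A,C), where σ(P,Q) = (1/2)·‖P−Q‖². (Collinearity is expressible purely via the world function.) -/
/-!
Put `u = B - A` and `v = C - A`. By polarization, `σ(A,B) + σ(A,C) - σ(B,C) = ⟪u, v⟫` and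
`4 σ(A,B) σ(A,C) = ‖u‖² ‖v‖²`, so the identity says that the Gram determinant
`‖u‖² ‖v‖² - ⟪u, v⟫²` of `u, v` vanishes, which happens exactly when `u, v` are linearly dependent.
-/

open Matrix

open scoped RealInnerProductSpace

variable {E : Type*} [NormedAddCommGroup E] [InnerProductSpace ℝ E]

theorem Matrix.det_gram_fin_two (u v : E) :
    (gram ℝ ![u, v]).det = ‖u‖ ^ 2 * ‖v‖ ^ 2 - ⟪u, v⟫ ^ 2 := by
  simp only [det_fin_two, gram_apply, Matrix.cons_val_zero, Matrix.cons_val_one,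
    real_inner_self_eq_norm_sq, real_inner_comm u v]
  ring

theorem not_linearIndependent_pair_iff_inner_sq (u v : E) :
    ¬ LinearIndependent ℝ ![u, v] ↔ ⟪u, v⟫ ^ 2 = ‖u‖ ^ 2 * ‖v‖ ^ 2 := by
  rw [← det_gram_ne_zero_iff_linearIndependent, not_not, det_gram_fin_two, sub_eq_zero, eq_comm]

theorem half_norm_sq_add_half_norm_sq_sub_half_norm_sq_eq_inner (A B C : E) :
    1 / 2 * ‖A - B‖ ^ 2 + 1 / 2 * ‖A - C‖ ^ 2 - 1 / 2 * ‖B - C‖ ^ 2 = ⟪B - A, C - A⟫ := by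
  have hBC : B - C = (B - A) - (C - A) := by abel
  rw [hBC, norm_sub_rev A B, norm_sub_rev A C, norm_sub_sq_real (B - A)]
  ring

theorem stmt13 (n : ℕ) (σ : EuclideanSpace ℝ (Fin n) → EuclideanSpace ℝ (Fin n) → ℝ)
    (hσ : ∀ P Q, σ P Q = (1/2) * ‖P - Q‖ ^ 2) :
    ∀ A B C : EuclideanSpace ℝ (Fin n),
      (¬ LinearIndependent ℝ ![B - A, C - A]) ↔
        (σ A B + σ A C - σ B C) ^ 2 = 4 * σ A B * σ A C := by
  intro A B C
  have hprod : 4 * σ A B * σ A C = ‖B - A‖ ^ 2 * ‖C - A‖ ^ 2 := by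
    rw [hσ, hσ, norm_sub_rev A B, norm_sub_rev A C]
    ring
  rw [hprod, hσ, hσ, hσ, half_norm_sq_add_half_norm_sq_sub_half_norm_sq_eq_inner,
    not_linearIndependent_pair_iff_inner_sq]
end
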